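/- arXiv:quant-ph/0009090 — 4 statements merged into one kernel-verified Lean document; each statement's English description precedes it below -/
import Mathlib

section
/- For every pure product state A = A₁⊗⋯⊗A_p on ℂ^N, one has Tr(E_ψ A) ≤ |v_{j₀}|², where |v_{j₀}| = max_j |v_j|. -/
open Matrix BigOperators ComplexOrder

noncomputable section

/-- The Frobenius inner product `⟨A, B⟩ = Tr(Aᴴ B)`. -/
def frobInner {m : Type*} [Fintype m] (A B : Matrix m m ℂ) : ℂ :=
  (Aᴴ * B).trace

/-- The Frobenius norm associated to the Frobenius inner product. -/
def frobNorm {m : Type*} [Fintype m] (A : Matrix m m ℂ) : ℝ :=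
  Real.sqrt (frobInner A A).re

/-- A state (density matrix): a positive semidefinite (Hermitian) matrix of trace one. -/
def IsState {m : Type*} [Fintype m] (M : Matrix m m ℂ) : Prop :=
  M.PosSemidef ∧ M.trace = 1

/-- A pure state: a rank-one orthogonal projection, i.e. a Hermitian idempotent of trace one. -/
def IsPureState {m : Type*} [Fintype m] (M : Matrix m m ℂ) : Prop :=
  M.IsHermitian ∧ M * M = M ∧ M.trace = 1

/-- The Kronecker product of the matrices `A α`, realized on the tuple basis of the
tensor product `ℂ^{n 0} ⊗ ⋯ ⊗ ℂ^{n (p-1)} ≃ ℂ^N`, `N = ∏ α, n α`. -/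
def prodMat {p : ℕ} {n : Fin p → ℕ} (A : ∀ α, Matrix (Fin (n α)) (Fin (n α)) ℂ) :
    Matrix (∀ α, Fin (n α)) (∀ α, Fin (n α)) ℂ :=
  fun j k => ∏ α, A α (j α) (k α)

/-- A pure product state: a Kronecker product of pure states on the factors. -/
def IsPureProductState {p : ℕ} {n : Fin p → ℕ}
    (M : Matrix (∀ α, Fin (n α)) (∀ α, Fin (n α)) ℂ) : Prop :=
  ∃ A : ∀ α, Matrix (Fin (n α)) (Fin (n α)) ℂ,
    (∀ α, IsPureState (A α)) ∧ M = prodMat A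

/-- A (fully) separable state: a finite convex combination of pure product states. -/
def IsSeparableState {p : ℕ} {n : Fin p → ℕ}
    (M : Matrix (∀ α, Fin (n α)) (∀ α, Fin (n α)) ℂ) : Prop :=
  ∃ (k : ℕ) (c : Fin k → ℝ) (P : Fin k → Matrix (∀ α, Fin (n α)) (∀ α, Fin (n α)) ℂ),
    (∀ i, 0 ≤ c i) ∧ (∑ i, c i) = 1 ∧ (∀ i, IsPureProductState (P i)) ∧
      M = ∑ i, (c i : ℂ) • P i

/-- The vector `ψ = ∑ j, v j • (e j ⊗ ⋯ ⊗ e j)`, where `e j` is the `j`-th standard basis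
vector of each factor (embedded via `n 0 ≤ n α`). -/
def psiVec {p : ℕ} {n : Fin (p + 2) → ℕ} (hn : Monotone n) (v : Fin (n 0) → ℂ) :
    (∀ α, Fin (n α)) → ℂ :=
  fun x => ∑ j : Fin (n 0), v j *
    ∏ α, (if x α = Fin.castLE (hn (Fin.zero_le α)) j then (1 : ℂ) else 0)

/-- The pure state `E_ψ = |ψ⟩⟨ψ|`. -/
def Epsi {p : ℕ} {n : Fin (p + 2) → ℕ} (hn : Monotone n) (v : Fin (n 0) → ℂ) :
    Matrix (∀ α, Fin (n α)) (∀ α, Fin (n α)) ℂ :=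
  fun x y => psiVec hn v x * star (psiVec hn v y)

/-! Only the diagonal indices `(j, …, j)` carry `ψ`, so
`Tr(E_ψ A) = ∑_{j,k} v_j v̄_k ∏_α A_α(k, j)`. A Hermitian idempotent `A_α` satisfies
`|A_α(k, j)| ≤ s_α(k) s_α(j)` with `s_α(j) = √(A_α)_{jj}` and `∑_j s_α(j)² ≤ 1`, whence
`|Tr(E_ψ A)| ≤ (∑_j |v_j| ∏_α s_α(j))²`. Bounding `|v_j| ≤ |v_{j₀}|`, every factor `s_α(j) ≤ 1`
except those for `α = 0, 1`, and `∑_j s_0(j) s_1(j) ≤ 1` by AM–GM, gives `|Tr(E_ψ A)| ≤ |v_{j₀}|²`.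
The trace is real, as the trace of a product of two Hermitian matrices. -/

-- For a pure state `|a⟩⟨a|` this is `i ↦ |a i|`.
def sqrtDiag {m : Type*} (M : Matrix m m ℂ) (i : m) : ℝ :=
  √(M i i).re

section PureState

variable {m : Type*} [Fintype m] {M : Matrix m m ℂ}

theorem IsPureState.apply_eq_sum (hM : IsPureState M) (j k : m) :
    M j k = ∑ l, M j l * star (M k l) := by
  conv_lhs => rw [← hM.2.1, mul_apply]
  exact Finset.sum_congr rfl fun l _ => by rw [← hM.1.apply l k]

theorem IsPureState.re_diag_eq_sum_norm_sq (hM : IsPureState M) (j : m) :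
    (M j j).re = ∑ l, ‖M j l‖ ^ 2 := by
  rw [hM.apply_eq_sum j j, Complex.re_sum]
  simp only [Complex.star_def, Complex.mul_conj, Complex.ofReal_re, Complex.normSq_eq_norm_sq]

theorem IsPureState.re_diag_nonneg (hM : IsPureState M) (j : m) : 0 ≤ (M j j).re := by
  rw [hM.re_diag_eq_sum_norm_sq]
  positivity

theorem IsPureState.sum_re_diag (hM : IsPureState M) : ∑ j, (M j j).re = 1 := by
  simpa [trace, Complex.re_sum] using congrArg Complex.re hM.2.2

theorem IsPureState.norm_apply_le (hM : IsPureState M) (j k : m) :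
    ‖M j k‖ ≤ sqrtDiag M j * sqrtDiag M k := by
  calc ‖M j k‖ = ‖∑ l, M j l * star (M k l)‖ := by rw [← hM.apply_eq_sum]
    _ ≤ ∑ l, ‖M j l‖ * ‖M k l‖ := by
        refine (norm_sum_le _ _).trans_eq ?_
        simp only [norm_mul, norm_star]
    _ ≤ √(∑ l, ‖M j l‖ ^ 2) * √(∑ l, ‖M k l‖ ^ 2) := Real.sum_mul_le_sqrt_mul_sqrt _ _ _
    _ = sqrtDiag M j * sqrtDiag M k := by
        rw [sqrtDiag, sqrtDiag, hM.re_diag_eq_sum_norm_sq, hM.re_diag_eq_sum_norm_sq]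

theorem IsPureState.sum_sqrtDiag_comp_sq_le {ι : Type*} [Fintype ι] (hM : IsPureState M)
    {f : ι → m} (hf : Function.Injective f) : ∑ i, sqrtDiag M (f i) ^ 2 ≤ 1 := by
  simp only [sqrtDiag, Real.sq_sqrt (hM.re_diag_nonneg _)]
  calc ∑ i, (M (f i) (f i)).re = ∑ j ∈ Finset.univ.map ⟨f, hf⟩, (M j j).re := by simp
    _ ≤ ∑ j, (M j j).re :=
        Finset.sum_le_univ_sum_of_nonneg fun j => hM.re_diag_nonneg j
    _ = 1 := hM.sum_re_diag

end PureState

theorem Matrix.IsHermitian.star_trace_mul {m : Type*} [Fintype m] {A B : Matrix m m ℂ}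
    (hA : A.IsHermitian) (hB : B.IsHermitian) : star (A * B).trace = (A * B).trace := by
  rw [← trace_conjTranspose, conjTranspose_mul, hA.eq, hB.eq, trace_mul_comm]

theorem Complex.le_ofReal_of_star_eq_of_norm_le {z : ℂ} {r : ℝ} (hz : star z = z) (hr : ‖z‖ ≤ r) :
    z ≤ r := by
  rw [← Complex.conj_eq_iff_re.mp hz, Complex.real_le_real]
  exact (Complex.re_le_norm z).trans hr

section ProdMat

variable {p : ℕ} {n : Fin p → ℕ} {u : ∀ α, Matrix (Fin (n α)) (Fin (n α)) ℂ}

theorem isHermitian_prodMat (hu : ∀ α, (u α).IsHermitian) : (prodMat u).IsHermitian := by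
  ext x y
  simp only [conjTranspose_apply, prodMat, star_prod, fun α => (hu α).apply]

theorem norm_prodMat_apply_le (hu : ∀ α, IsPureState (u α)) (x y : ∀ α, Fin (n α)) :
    ‖prodMat u x y‖ ≤ (∏ α, sqrtDiag (u α) (x α)) * ∏ α, sqrtDiag (u α) (y α) := by
  rw [prodMat, norm_prod, ← Finset.prod_mul_distrib]
  exact Finset.prod_le_prod (fun α _ => norm_nonneg _) fun α _ => (hu α).norm_apply_le _ _

end ProdMat

theorem sum_prod_le_one_of_sum_sq_le_one {ι κ : Type*} [Fintype ι] [Fintype κ] [DecidableEq κ]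
    {s : κ → ι → ℝ} (hs : ∀ α i, 0 ≤ s α i) (hs1 : ∀ α, ∑ i, s α i ^ 2 ≤ 1)
    {α₀ α₁ : κ} (hα : α₀ ≠ α₁) : ∑ i, ∏ α, s α i ≤ 1 := by
  have hle_one : ∀ α i, s α i ≤ 1 := fun α i =>
    (sq_le_one_iff₀ (hs α i)).mp <|
      (Finset.single_le_sum (fun i _ => sq_nonneg (s α i)) (Finset.mem_univ i)).trans (hs1 α)
  have hprod : ∀ i, ∏ α, s α i ≤ s α₀ i * s α₁ i := fun i => by
    rw [← Finset.prod_mul_prod_compl {α₀, α₁}, Finset.prod_pair hα]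
    exact mul_le_of_le_one_right (mul_nonneg (hs α₀ i) (hs α₁ i))
      (Finset.prod_le_one (fun α _ => hs α i) fun α _ => hle_one α i)
  calc ∑ i, ∏ α, s α i ≤ ∑ i, (s α₀ i ^ 2 + s α₁ i ^ 2) / 2 :=
        Finset.sum_le_sum fun i _ =>
          (hprod i).trans (by linarith [two_mul_le_add_sq (s α₀ i) (s α₁ i)])
    _ = (∑ i, s α₀ i ^ 2 + ∑ i, s α₁ i ^ 2) / 2 := by
        rw [← Finset.sum_div, Finset.sum_add_distrib]
    _ ≤ 1 := by linarith [hs1 α₀, hs1 α₁]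

theorem sum_mul_prod_le_of_sum_sq_le_one {ι κ : Type*} [Fintype ι] [Fintype κ] [DecidableEq κ]
    {s : κ → ι → ℝ} (hs : ∀ α i, 0 ≤ s α i) (hs1 : ∀ α, ∑ i, s α i ^ 2 ≤ 1)
    {α₀ α₁ : κ} (hα : α₀ ≠ α₁) {c : ι → ℝ} {C : ℝ} (hc : ∀ i, c i ≤ C) (hC : 0 ≤ C) :
    ∑ i, c i * ∏ α, s α i ≤ C :=
  calc ∑ i, c i * ∏ α, s α i ≤ ∑ i, C * ∏ α, s α i :=
        Finset.sum_le_sum fun i _ =>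
          mul_le_mul_of_nonneg_right (hc i) (Finset.prod_nonneg fun α _ => hs α i)
    _ ≤ C := by
        rw [← Finset.mul_sum]
        exact mul_le_of_le_one_right hC (sum_prod_le_one_of_sum_sq_le_one hs hs1 hα)

section Psi

variable {p : ℕ} {n : Fin (p + 2) → ℕ} (hn : Monotone n) (v : Fin (n 0) → ℂ)

def diagIndex (j : Fin (n 0)) : ∀ α, Fin (n α) := fun α => Fin.castLE (hn (Fin.zero_le α)) j

theorem psiVec_eq (x : ∀ α, Fin (n α)) :
    psiVec hn v x = ∑ j, v j * if x = diagIndex hn j then 1 else 0 := by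
  simp only [psiVec, Fintype.prod_boole, ← funext_iff]
  rfl

theorem sum_psiVec_mul (g : (∀ α, Fin (n α)) → ℂ) :
    ∑ x, psiVec hn v x * g x = ∑ j, v j * g (diagIndex hn j) := by
  simp only [psiVec_eq, Finset.sum_mul, mul_assoc, ite_mul, one_mul, zero_mul, mul_ite, mul_zero]
  rw [Finset.sum_comm]
  simp

theorem sum_star_psiVec_mul (g : (∀ α, Fin (n α)) → ℂ) :
    ∑ x, star (psiVec hn v x) * g x = ∑ j, star (v j) * g (diagIndex hn j) := by
  simpa [star_sum, mul_comm] using congrArg star (sum_psiVec_mul hn v (star g))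

theorem isHermitian_Epsi : (Epsi hn v).IsHermitian := by
  ext x y
  simp [Epsi, mul_comm]

theorem trace_Epsi_mul (A : Matrix (∀ α, Fin (n α)) (∀ α, Fin (n α)) ℂ) :
    (Epsi hn v * A).trace =
      ∑ j, ∑ k, v j * star (v k) * A (diagIndex hn k) (diagIndex hn j) := by
  simp only [trace, diag_apply, mul_apply, Epsi, mul_assoc, ← Finset.mul_sum]
  rw [sum_psiVec_mul]
  simp only [sum_star_psiVec_mul, Finset.mul_sum]

theorem norm_trace_Epsi_mul_le (A : Matrix (∀ α, Fin (n α)) (∀ α, Fin (n α)) ℂ)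
    (a : Fin (n 0) → ℝ) (hA : ∀ j k, ‖A (diagIndex hn j) (diagIndex hn k)‖ ≤ a j * a k) :
    ‖(Epsi hn v * A).trace‖ ≤ (∑ j, ‖v j‖ * a j) ^ 2 := by
  rw [trace_Epsi_mul, sq, Finset.sum_mul_sum]
  refine (norm_sum_le _ _).trans <| Finset.sum_le_sum fun j _ =>
    (norm_sum_le _ _).trans <| Finset.sum_le_sum fun k _ => ?_
  rw [norm_mul, norm_mul, norm_star]
  calc ‖v j‖ * ‖v k‖ * ‖A (diagIndex hn k) (diagIndex hn j)‖ ≤ ‖v j‖ * ‖v k‖ * (a k * a j) := by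
        gcongr
        exact hA k j
    _ = ‖v j‖ * a j * (‖v k‖ * a k) := by ring

end Psi

theorem trace_Epsi_pureProduct_le_general {p : ℕ} {n : Fin (p + 2) → ℕ}
    (hn : Monotone n)
    (v : Fin (n 0) → ℂ)
    (j₀ : Fin (n 0)) (hj₀ : ∀ j, ‖v j‖ ≤ ‖v j₀‖)
    (A : Matrix (∀ α, Fin (n α)) (∀ α, Fin (n α)) ℂ) (hA : IsPureProductState A) :
    (Epsi hn v * A).trace ≤ ((‖v j₀‖ ^ 2 : ℝ) : ℂ) := by
  obtain ⟨u, hu, rfl⟩ := hA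
  set s : Fin (p + 2) → Fin (n 0) → ℝ := fun α j => sqrtDiag (u α) (diagIndex hn j α)
  have hs : ∀ α j, 0 ≤ s α j := fun _ _ => Real.sqrt_nonneg _
  have hs1 : ∀ α, ∑ j, s α j ^ 2 ≤ 1 := fun α =>
    (hu α).sum_sqrtDiag_comp_sq_le (Fin.castLE_injective _)
  have hsum : ∑ j, ‖v j‖ * ∏ α, s α j ≤ ‖v j₀‖ :=
    sum_mul_prod_le_of_sum_sq_le_one hs hs1 (by simp : (0 : Fin (p + 2)) ≠ 1) hj₀ (norm_nonneg _)
  refine Complex.le_ofReal_of_star_eq_of_norm_le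
    ((isHermitian_Epsi hn v).star_trace_mul (isHermitian_prodMat fun α => (hu α).1)) ?_
  calc ‖(Epsi hn v * prodMat u).trace‖ ≤ (∑ j, ‖v j‖ * ∏ α, s α j) ^ 2 :=
        norm_trace_Epsi_mul_le hn v _ _ fun j k => norm_prodMat_apply_le hu _ _
    _ ≤ ‖v j₀‖ ^ 2 := by
        gcongr
        exact Finset.sum_nonneg fun j _ =>
          mul_nonneg (norm_nonneg _) (Finset.prod_nonneg fun α _ => hs α j)

/-- For every pure product state `A = A₁ ⊗ ⋯ ⊗ A_p` on
`ℂ^{n₁} ⊗ ⋯ ⊗ ℂ^{n_p}` (with `2 ≤ n₁ ≤ ⋯ ≤ n_p`, `p ≥ 2`), one has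
`Tr(E_ψ A) ≤ |v j₀|²` where `|v j₀| = max_j |v j|`.  (The inequality is in the
complex order, so in particular the trace is real.) -/
theorem trace_Epsi_pureProduct_le {p : ℕ} {n : Fin (p + 2) → ℕ}
    (hn : Monotone n) (hn₁ : 2 ≤ n 0)
    (v : Fin (n 0) → ℂ) (hv : ∑ j, ‖v j‖ ^ 2 = 1)
    (j₀ : Fin (n 0)) (hj₀ : ∀ j, ‖v j‖ ≤ ‖v j₀‖)
    (A : Matrix (∀ α, Fin (n α)) (∀ α, Fin (n α)) ℂ) (hA : IsPureProductState A) :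
    (Epsi hn v * A).trace ≤ ((‖v j₀‖ ^ 2 : ℝ) : ℂ) :=
  trace_Epsi_pureProduct_le_general hn v j₀ hj₀ A hA
end
end

section
/- Every separable state Q on ℂ^N satisfies Tr(Q E_ψ) ≤ |v_{j₀}|², where |v_{j₀}| = max_j |v_j|. Consequently, every state Q with Tr(Q E_ψ) > |v_{j₀}|² is entangled. -/
open Matrix BigOperators ComplexOrder

noncomputable section

/-! By linearity it suffices to treat a pure product state `P = ⊗ A_α`. With `d k = (k, …, k)`,
`Tr(P E_ψ) = v* B v` for the principal submatrix `B` of `P` on the indices `d k`. Since `P` is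
itself a pure state, `B` is positive semidefinite, so `v* B v` is real and nonnegative,
`|B k j| ≤ √(B k k) √(B j j)`, and `v* B v ≤ (∑ k, |v k| √(B k k))² ≤ |v j₀|² (∑ k, √(B k k))²`.
Finally `B k k = ∏ α, (A α) (d k α) (d k α)`; bounding all factors but the first two by `1` and
applying AM–GM to those two gives `∑ k, √(B k k) ≤ (Tr A₀ + Tr A₁) / 2 = 1`. -/

theorem Matrix.PosSemidef.ofReal_re_apply_self {m : Type*} {A : Matrix m m ℂ}
    (hA : A.PosSemidef) (i : m) : ((A i i).re : ℂ) = A i i :=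
  (Complex.eq_re_of_ofReal_le (r := 0) (by simpa using hA.diag_nonneg)).symm

theorem Matrix.PosSemidef.re_apply_self_nonneg {m : Type*} {A : Matrix m m ℂ}
    (hA : A.PosSemidef) (i : m) : 0 ≤ (A i i).re :=
  (Complex.nonneg_iff.1 hA.diag_nonneg).1

theorem Matrix.PosSemidef.norm_apply_sq_le {m : Type*} [Fintype m] {A : Matrix m m ℂ}
    (hA : A.PosSemidef) (i j : m) : ‖A i j‖ ^ 2 ≤ (A i i).re * (A j j).re := by
  have hdet := (hA.submatrix ![i, j]).det_nonneg
  rw [Matrix.det_fin_two, sub_nonneg] at hdet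
  simp only [Matrix.submatrix_apply, Matrix.cons_val_zero, Matrix.cons_val_one] at hdet
  have hji : A j i * A i j = ((‖A i j‖ ^ 2 : ℝ) : ℂ) := by
    rw [← hA.1.apply j i, mul_comm, Complex.star_def, Complex.mul_conj', Complex.ofReal_pow]
  rw [mul_comm (A i j), hji, ← hA.ofReal_re_apply_self i, ← hA.ofReal_re_apply_self j,
    ← Complex.ofReal_mul, Complex.real_le_real] at hdet
  exact hdet

theorem Matrix.PosSemidef.norm_apply_le {m : Type*} [Fintype m] {A : Matrix m m ℂ}
    (hA : A.PosSemidef) (i j : m) : ‖A i j‖ ≤ √(A i i).re * √(A j j).re := by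
  rw [← Real.sqrt_mul (hA.re_apply_self_nonneg i), ← abs_norm]
  exact Real.abs_le_sqrt (hA.norm_apply_sq_le i j)

theorem Matrix.PosSemidef.norm_star_dotProduct_mulVec_le {m : Type*} [Fintype m]
    {A : Matrix m m ℂ} (hA : A.PosSemidef) (v : m → ℂ) :
    ‖star v ⬝ᵥ A *ᵥ v‖ ≤ (∑ i, ‖v i‖ * √(A i i).re) ^ 2 := by
  simp only [dotProduct, mulVec, Finset.mul_sum]
  calc ‖∑ i, ∑ j, star (v i) * (A i j * v j)‖
      ≤ ∑ i, ∑ j, ‖v i‖ * (‖A i j‖ * ‖v j‖) := by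
        refine (norm_sum_le _ _).trans (Finset.sum_le_sum fun i _ => ?_)
        refine (norm_sum_le _ _).trans (Finset.sum_le_sum fun j _ => ?_)
        rw [norm_mul, norm_mul, norm_star]
    _ ≤ ∑ i, ∑ j, (‖v i‖ * √(A i i).re) * (‖v j‖ * √(A j j).re) := by
        refine Finset.sum_le_sum fun i _ => Finset.sum_le_sum fun j _ => ?_
        calc ‖v i‖ * (‖A i j‖ * ‖v j‖) ≤ ‖v i‖ * ((√(A i i).re * √(A j j).re) * ‖v j‖) := by
              gcongr; exact hA.norm_apply_le i j
          _ = _ := by ring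
    _ = (∑ i, ‖v i‖ * √(A i i).re) ^ 2 := by rw [sq, Finset.sum_mul_sum]

theorem Complex.le_ofReal_of_nonneg_of_norm_le {z : ℂ} {r : ℝ} (hz : 0 ≤ z) (h : ‖z‖ ≤ r) :
    z ≤ r := by
  rwa [← Complex.re_eq_norm.2 hz, ← Complex.real_le_real,
    ← Complex.eq_re_of_ofReal_le (r := 0) (by simpa using hz)] at h

theorem sum_sqrt_prod_le_one {ι κ : Type*} [Fintype ι] [Fintype κ] {a : ι → κ → ℝ}
    (ha : ∀ α k, 0 ≤ a α k) (hsum : ∀ α, ∑ k, a α k ≤ 1) {β γ : ι} (hβγ : β ≠ γ) :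
    ∑ k, √(∏ α, a α k) ≤ 1 := by
  classical
  have hle : ∀ α k, a α k ≤ 1 := fun α k =>
    (Finset.single_le_sum (fun k _ => ha α k) (Finset.mem_univ k)).trans (hsum α)
  have hprod : ∀ k, ∏ α, a α k ≤ a β k * a γ k := by
    intro k
    rw [← Finset.mul_prod_erase _ _ (Finset.mem_univ β),
      ← Finset.mul_prod_erase _ _ (Finset.mem_erase.2 ⟨hβγ.symm, Finset.mem_univ γ⟩), ← mul_assoc]
    exact mul_le_of_le_one_right (mul_nonneg (ha β k) (ha γ k))
      (Finset.prod_le_one (fun α _ => ha α k) (fun α _ => hle α k))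
  have hamgm : ∀ k, √(∏ α, a α k) ≤ (a β k + a γ k) / 2 := by
    intro k
    refine (Real.sqrt_le_sqrt (hprod k)).trans ?_
    rw [Real.sqrt_mul (ha β k)]
    nlinarith [sq_nonneg (√(a β k) - √(a γ k)), Real.sq_sqrt (ha β k), Real.sq_sqrt (ha γ k)]
  calc ∑ k, √(∏ α, a α k) ≤ ∑ k, (a β k + a γ k) / 2 := Finset.sum_le_sum fun k _ => hamgm k
    _ = ((∑ k, a β k) + ∑ k, a γ k) / 2 := by rw [← Finset.sum_add_distrib, Finset.sum_div]
    _ ≤ 1 := by linarith [hsum β, hsum γ]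

theorem IsPureState.posSemidef {m : Type*} [Fintype m] {A : Matrix m m ℂ} (hA : IsPureState A) :
    A.PosSemidef := by
  have hgram : A = Aᴴ * A := by rw [hA.1, hA.2.1]
  rw [hgram]
  exact posSemidef_conjTranspose_mul_self A

theorem IsPureState.isState {m : Type*} [Fintype m] {A : Matrix m m ℂ} (hA : IsPureState A) :
    IsState A :=
  ⟨hA.posSemidef, hA.2.2⟩

theorem IsState.sum_re_apply_comp_le_one {m κ : Type*} [Fintype m] [Fintype κ]
    {M : Matrix m m ℂ} (hM : IsState M) {e : κ → m} (he : Function.Injective e) :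
    ∑ k, (M (e k) (e k)).re ≤ 1 := by
  have htrace : ∑ i, (M i i).re = 1 := by
    simpa [Matrix.trace, Complex.re_sum] using congrArg Complex.re hM.2
  have hmap := Finset.sum_map Finset.univ ⟨e, he⟩ fun i => (M i i).re
  rw [Function.Embedding.coeFn_mk] at hmap
  rw [← htrace, ← hmap]
  exact Finset.sum_le_sum_of_subset_of_nonneg (Finset.subset_univ _)
    fun i _ _ => hM.1.re_apply_self_nonneg i

theorem IsSeparableState.trace_mul_le {p : ℕ} {n : Fin p → ℕ}
    {Q E : Matrix (∀ α, Fin (n α)) (∀ α, Fin (n α)) ℂ} {r : ℝ} (hQ : IsSeparableState Q)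
    (h : ∀ P, IsPureProductState P → (P * E).trace ≤ (r : ℂ)) : (Q * E).trace ≤ r := by
  obtain ⟨k, c, P, hc0, hc1, hP, rfl⟩ := hQ
  calc ((∑ i, (c i : ℂ) • P i) * E).trace = ∑ i, (c i : ℂ) * (P i * E).trace := by
        simp only [Finset.sum_mul, trace_sum, smul_mul, trace_smul, smul_eq_mul]
    _ ≤ ∑ i, (c i : ℂ) * r :=
        Finset.sum_le_sum fun i _ =>
          mul_le_mul_of_nonneg_left (h _ (hP i)) (Complex.zero_le_real.2 (hc0 i))
    _ = r := by rw [← Finset.sum_mul, ← Complex.ofReal_sum, hc1, Complex.ofReal_one, one_mul]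

section ProdMat

variable {p : ℕ} {n : Fin p → ℕ}

theorem prodMat_mul (A B : ∀ α, Matrix (Fin (n α)) (Fin (n α)) ℂ) :
    prodMat A * prodMat B = prodMat fun α => A α * B α := by
  ext j k
  simp only [prodMat, Matrix.mul_apply, ← Finset.prod_mul_distrib, Fintype.prod_sum]

theorem conjTranspose_prodMat (A : ∀ α, Matrix (Fin (n α)) (Fin (n α)) ℂ) :
    (prodMat A)ᴴ = prodMat fun α => (A α)ᴴ := by
  ext j k
  simp only [prodMat, Matrix.conjTranspose_apply, star_prod]

theorem trace_prodMat (A : ∀ α, Matrix (Fin (n α)) (Fin (n α)) ℂ) :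
    (prodMat A).trace = ∏ α, (A α).trace := by
  simp only [Matrix.trace, Matrix.diag, prodMat, Fintype.prod_sum]

theorem IsPureProductState.isPureState {M : Matrix (∀ α, Fin (n α)) (∀ α, Fin (n α)) ℂ}
    (hM : IsPureProductState M) : IsPureState M := by
  obtain ⟨A, hA, rfl⟩ := hM
  refine ⟨?_, ?_, ?_⟩
  · rw [Matrix.IsHermitian, conjTranspose_prodMat]
    exact congrArg prodMat (funext fun α => (hA α).1)
  · rw [prodMat_mul]
    exact congrArg prodMat (funext fun α => (hA α).2.1)
  · simp only [trace_prodMat, (hA _).2.2, Finset.prod_const_one]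

end ProdMat

section Psi

variable {p : ℕ} {n : Fin (p + 2) → ℕ} (hn : Monotone n)

def diagTuple (j : Fin (n 0)) : ∀ α, Fin (n α) := fun α => Fin.castLE (hn (Fin.zero_le α)) j

theorem psiVec_apply (v : Fin (n 0) → ℂ) (x : ∀ α, Fin (n α)) :
    psiVec hn v x = ∑ j, v j * if x = diagTuple hn j then 1 else 0 := by
  simp only [psiVec, Finset.prod_boole, Finset.mem_univ, forall_const, funext_iff, diagTuple]

theorem star_psiVec (v : Fin (n 0) → ℂ) : star (psiVec hn v) = psiVec hn (star v) := by
  ext x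
  simp [psiVec_apply, star_sum, apply_ite star]

theorem dotProduct_psiVec (u : (∀ α, Fin (n α)) → ℂ) (v : Fin (n 0) → ℂ) :
    u ⬝ᵥ psiVec hn v = ∑ j, u (diagTuple hn j) * v j := by
  simp only [dotProduct, psiVec_apply, Finset.mul_sum, mul_ite, mul_one, mul_zero]
  rw [Finset.sum_comm]
  simp [mul_comm]

theorem trace_mul_Epsi (Q : Matrix (∀ α, Fin (n α)) (∀ α, Fin (n α)) ℂ) (v : Fin (n 0) → ℂ) :
    (Q * Epsi hn v).trace = star v ⬝ᵥ Q.submatrix (diagTuple hn) (diagTuple hn) *ᵥ v := by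
  have hE : Epsi hn v = vecMulVec (psiVec hn v) (star (psiVec hn v)) := rfl
  rw [hE, mul_vecMulVec, trace_vecMulVec, star_psiVec, dotProduct_psiVec, dotProduct_comm]
  refine Finset.sum_congr rfl fun k _ => congrArg (· * _) ?_
  exact dotProduct_psiVec hn _ v

theorem IsPureProductState.sum_sqrt_re_apply_diagTuple_le_one
    {P : Matrix (∀ α, Fin (n α)) (∀ α, Fin (n α)) ℂ} (hP : IsPureProductState P) :
    ∑ k, √(P (diagTuple hn k) (diagTuple hn k)).re ≤ 1 := by
  obtain ⟨A, hA, rfl⟩ := hP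
  have hre : ∀ x, (prodMat A x x).re = ∏ α, (A α (x α) (x α)).re := by
    intro x
    rw [← Complex.ofReal_re (∏ α, (A α (x α) (x α)).re), Complex.ofReal_prod]
    simp only [(hA _).posSemidef.ofReal_re_apply_self]
    rfl
  simp only [hre]
  exact sum_sqrt_prod_le_one (fun α k => (hA α).posSemidef.re_apply_self_nonneg _)
    (fun α => (hA α).isState.sum_re_apply_comp_le_one (Fin.castLE_injective _))
    (β := 0) (γ := 1) (by simp)

theorem trace_mul_Epsi_le_of_isPureProductState {v : Fin (n 0) → ℂ} {j₀ : Fin (n 0)}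
    (hj₀ : ∀ j, ‖v j‖ ≤ ‖v j₀‖) {P : Matrix (∀ α, Fin (n α)) (∀ α, Fin (n α)) ℂ}
    (hP : IsPureProductState P) : (P * Epsi hn v).trace ≤ ((‖v j₀‖ ^ 2 : ℝ) : ℂ) := by
  rw [trace_mul_Epsi]
  set B := P.submatrix (diagTuple hn) (diagTuple hn)
  have hB : B.PosSemidef := hP.isPureState.posSemidef.submatrix _
  have hdiag : ∑ k, √(B k k).re ≤ 1 := hP.sum_sqrt_re_apply_diagTuple_le_one hn
  refine Complex.le_ofReal_of_nonneg_of_norm_le (hB.dotProduct_mulVec_nonneg v) ?_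
  calc ‖star v ⬝ᵥ B *ᵥ v‖ ≤ (∑ k, ‖v k‖ * √(B k k).re) ^ 2 := hB.norm_star_dotProduct_mulVec_le v
    _ ≤ (‖v j₀‖ * ∑ k, √(B k k).re) ^ 2 := by
        rw [Finset.mul_sum]
        gcongr with k
        exact hj₀ k
    _ ≤ ‖v j₀‖ ^ 2 := by
        rw [mul_pow]
        exact mul_le_of_le_one_right (by positivity)
          (pow_le_one₀ (Finset.sum_nonneg fun k _ => Real.sqrt_nonneg _) hdiag)

end Psi

theorem separable_trace_le_and_entangled_general {p : ℕ} {n : Fin (p + 2) → ℕ}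
    (hn : Monotone n)
    (v : Fin (n 0) → ℂ)
    (j₀ : Fin (n 0)) (hj₀ : ∀ j, ‖v j‖ ≤ ‖v j₀‖) :
    (∀ Q : Matrix (∀ α, Fin (n α)) (∀ α, Fin (n α)) ℂ, IsSeparableState Q →
        (Q * Epsi hn v).trace ≤ ((‖v j₀‖ ^ 2 : ℝ) : ℂ)) ∧
      (∀ Q : Matrix (∀ α, Fin (n α)) (∀ α, Fin (n α)) ℂ, IsState Q →
        ((‖v j₀‖ ^ 2 : ℝ) : ℂ) < (Q * Epsi hn v).trace → ¬ IsSeparableState Q) := by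
  have hsep : ∀ Q : Matrix (∀ α, Fin (n α)) (∀ α, Fin (n α)) ℂ, IsSeparableState Q →
      (Q * Epsi hn v).trace ≤ ((‖v j₀‖ ^ 2 : ℝ) : ℂ) := fun Q hQ =>
    hQ.trace_mul_le fun P hP => trace_mul_Epsi_le_of_isPureProductState hn hj₀ hP
  exact ⟨hsep, fun Q _ hlt hQ => lt_irrefl _ (hlt.trans_le (hsep Q hQ))⟩

/-- Every separable state `Q` satisfies `Tr(Q E_ψ) ≤ |v j₀|²`
(inequality in the complex order, so in particular the trace is real); consequently,
every state `Q` with `Tr(Q E_ψ) > |v j₀|²` is entangled (i.e. not separable). -/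
theorem separable_trace_le_and_entangled {p : ℕ} {n : Fin (p + 2) → ℕ}
    (hn : Monotone n) (hn₁ : 2 ≤ n 0)
    (v : Fin (n 0) → ℂ) (hv : ∑ j, ‖v j‖ ^ 2 = 1)
    (j₀ : Fin (n 0)) (hj₀ : ∀ j, ‖v j‖ ≤ ‖v j₀‖) :
    (∀ Q : Matrix (∀ α, Fin (n α)) (∀ α, Fin (n α)) ℂ, IsSeparableState Q →
        (Q * Epsi hn v).trace ≤ ((‖v j₀‖ ^ 2 : ℝ) : ℂ)) ∧
      (∀ Q : Matrix (∀ α, Fin (n α)) (∀ α, Fin (n α)) ℂ, IsState Q →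
        ((‖v j₀‖ ^ 2 : ℝ) : ℂ) < (Q * Epsi hn v).trace → ¬ IsSeparableState Q) :=
  separable_trace_le_and_entangled_general hn v j₀ hj₀
end
end

section
/- Let N ≥ 2, let E be a pure state (rank-one orthogonal projection) on ℂ^N, and let X and Y be Hermitian N×N complex matrices each of trace 1. Then ‖X − Y‖ ≥ |Tr(XE) − Tr(YE)| · √(N/(N−1)) in Frobenius norm. -/
open Matrix BigOperators ComplexOrder

noncomputable section

/-! Since `Tr X = Tr Y`, the difference `Tr(XE) - Tr(YE)` equals `Tr((X - Y) F)` for the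
traceless shift `F = E - 1/N` of `E`. Cauchy–Schwarz for the Frobenius inner product bounds it by
`‖X - Y‖ ‖F‖`, and `E² = E`, `Tr E = 1` give `‖F‖² = 1 - 1/N`. -/

open WithLp

section Frobenius

variable {m : Type*} [Fintype m]

lemma frobInner_eq_inner (A B : Matrix m m ℂ) :
    frobInner A B = inner ℂ (toLp 2 (Function.uncurry A)) (toLp 2 (Function.uncurry B)) := by
  simp only [frobInner, trace, diag, mul_apply, conjTranspose_apply, PiLp.inner_apply,
    RCLike.inner_apply, Fintype.sum_prod_type, RCLike.star_def]
  rw [Finset.sum_comm]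
  exact Finset.sum_congr rfl fun _ _ => Finset.sum_congr rfl fun _ _ => mul_comm _ _

lemma frobNorm_eq_norm (A : Matrix m m ℂ) : frobNorm A = ‖toLp 2 (Function.uncurry A)‖ := by
  rw [frobNorm, frobInner_eq_inner, norm_eq_sqrt_re_inner (𝕜 := ℂ)]
  rfl

lemma norm_frobInner_le (A B : Matrix m m ℂ) : ‖frobInner A B‖ ≤ frobNorm A * frobNorm B := by
  rw [frobInner_eq_inner, frobNorm_eq_norm, frobNorm_eq_norm]
  exact norm_inner_le_norm _ _

lemma frobNorm_conjTranspose (A : Matrix m m ℂ) : frobNorm Aᴴ = frobNorm A := by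
  rw [frobNorm, frobNorm, frobInner, frobInner, conjTranspose_conjTranspose, trace_mul_comm]

lemma norm_trace_mul_le (A B : Matrix m m ℂ) : ‖(A * B).trace‖ ≤ frobNorm A * frobNorm B := by
  simpa only [frobInner, conjTranspose_conjTranspose, frobNorm_conjTranspose] using
    norm_frobInner_le Aᴴ B

end Frobenius

lemma trace_mul_sub_trace_mul_eq_trace_sub_mul_sub_smul_one {m R : Type*} [Fintype m]
    [DecidableEq m] [CommRing R] {X Y : Matrix m m R} (h : X.trace = Y.trace)
    (E : Matrix m m R) (c : R) :
    (X * E).trace - (Y * E).trace = ((X - Y) * (E - c • 1)).trace := by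
  rw [mul_sub, trace_sub, Matrix.mul_smul, mul_one, trace_smul, trace_sub, h, sub_self, smul_zero,
    sub_zero, sub_mul, trace_sub]

section PureState

variable {m : Type*} [Fintype m] [DecidableEq m] {E : Matrix m m ℂ}

lemma IsPureState.frobInner_sub_smul_one_self (hE : IsPureState E) {c : ℂ} (hc : star c = c) :
    frobInner (E - c • 1) (E - c • 1) = 1 - 2 * c + c ^ 2 * Fintype.card m := by
  obtain ⟨hEh, hEE, hEt⟩ := hE
  have hsq : (E - c • 1)ᴴ * (E - c • 1) = E - (2 * c) • E + c ^ 2 • (1 : Matrix m m ℂ) := by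
    rw [conjTranspose_sub, conjTranspose_smul, hEh.eq, conjTranspose_one, hc, sub_mul, mul_sub,
      mul_sub, hEE]
    simp only [Matrix.smul_mul, Matrix.mul_smul, Matrix.mul_one, Matrix.one_mul, smul_smul]
    module
  rw [frobInner, hsq, trace_add, trace_sub, trace_smul, trace_smul, hEt, trace_one, smul_eq_mul,
    smul_eq_mul, mul_one]

lemma IsPureState.frobNorm_sub_inv_card_smul_one (hE : IsPureState E) :
    frobNorm (E - (Fintype.card m : ℂ)⁻¹ • 1) =
      √(((Fintype.card m : ℝ) - 1) / Fintype.card m) := by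
  have : Nonempty m := by
    rcases isEmpty_or_nonempty m with hm | hm
    · simpa [trace_eq_zero_of_isEmpty] using hE.2.2
    · exact hm
  have hinner : frobInner (E - (Fintype.card m : ℂ)⁻¹ • 1) (E - (Fintype.card m : ℂ)⁻¹ • 1) =
      (((Fintype.card m - 1) / Fintype.card m : ℝ) : ℂ) := by
    rw [hE.frobInner_sub_smul_one_self (by simp)]
    push_cast
    field_simp
    ring
  rw [frobNorm, hinner, Complex.ofReal_re]

end PureState

theorem frobNorm_sub_ge_trace_diff_general {N : ℕ}
    (E X Y : Matrix (Fin N) (Fin N) ℂ) (hE : IsPureState E)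
    (hXt : X.trace = 1) (hYt : Y.trace = 1) :
    ‖(X * E).trace - (Y * E).trace‖ * Real.sqrt ((N : ℝ) / ((N : ℝ) - 1))
      ≤ frobNorm (X - Y) := by
  have hF : frobNorm (E - (N : ℂ)⁻¹ • 1) = √(((N : ℝ) - 1) / N) := by
    simpa only [Fintype.card_fin] using hE.frobNorm_sub_inv_card_smul_one
  calc ‖(X * E).trace - (Y * E).trace‖ * √(N / (N - 1))
      = ‖((X - Y) * (E - (N : ℂ)⁻¹ • 1)).trace‖ * √(N / (N - 1)) := by
        rw [trace_mul_sub_trace_mul_eq_trace_sub_mul_sub_smul_one (hXt.trans hYt.symm)]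
    _ ≤ frobNorm (X - Y) * √((N - 1) / N) * √(N / (N - 1)) := by
        gcongr
        exact (norm_trace_mul_le _ _).trans_eq (by rw [hF])
    -- an inequality, not an equality: for `N ≤ 1` both radicands are `0` (division by zero)
    _ ≤ frobNorm (X - Y) := by
        rw [mul_assoc, ← inv_div, Real.sqrt_inv]
        exact mul_le_of_le_one_right (Real.sqrt_nonneg _) inv_mul_le_one

/-- For `N ≥ 2`, a pure state `E` on `ℂ^N`, and Hermitian `N × N`
matrices `X, Y` of trace one, `‖X - Y‖ ≥ |Tr(XE) - Tr(YE)| ⬝ √(N/(N-1))`. -/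
theorem frobNorm_sub_ge_trace_diff {N : ℕ} (hN : 2 ≤ N)
    (E X Y : Matrix (Fin N) (Fin N) ℂ) (hE : IsPureState E)
    (hX : X.IsHermitian) (hY : Y.IsHermitian)
    (hXt : X.trace = 1) (hYt : Y.trace = 1) :
    ‖(X * E).trace - (Y * E).trace‖ * Real.sqrt ((N : ℝ) / ((N : ℝ) - 1))
      ≤ frobNorm (X - Y) :=
  frobNorm_sub_ge_trace_diff_general E X Y hE hXt hYt
end
end

section
/- Let 2 ≤ N₁ ≤ N₂ and N = N₁N₂, and let E be the maximally entangled pure state on ℂ^{N₁}⊗ℂ^{N₂}, i.e. E = |ψ⟩⟨ψ| with ψ = (1/√N₁) Σ_{j=1}^{N₁} e_j⊗e_j. Then every separable state Q on ℂ^N satisfies 0 ≤ Tr(QE) ≤ 1/N₁. -/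
open Matrix BigOperators ComplexOrder

noncomputable section

/-- The Kronecker product of two matrices, on the product basis. -/
def prodMat2 {m₁ m₂ : Type*} (A : Matrix m₁ m₁ ℂ) (B : Matrix m₂ m₂ ℂ) :
    Matrix (m₁ × m₂) (m₁ × m₂) ℂ :=
  fun j k => A j.1 k.1 * B j.2 k.2

/-- A pure product state on a bipartite system. -/
def IsPureProductState2 {m₁ m₂ : Type*} [Fintype m₁] [Fintype m₂]
    (M : Matrix (m₁ × m₂) (m₁ × m₂) ℂ) : Prop :=
  ∃ (A : Matrix m₁ m₁ ℂ) (B : Matrix m₂ m₂ ℂ),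
    IsPureState A ∧ IsPureState B ∧ M = prodMat2 A B

/-- A separable state on a bipartite system: a finite convex combination of
pure product states. -/
def IsSeparable2 {m₁ m₂ : Type*} [Fintype m₁] [Fintype m₂]
    (M : Matrix (m₁ × m₂) (m₁ × m₂) ℂ) : Prop :=
  ∃ (k : ℕ) (c : Fin k → ℝ) (P : Fin k → Matrix (m₁ × m₂) (m₁ × m₂) ℂ),
    (∀ i, 0 ≤ c i) ∧ (∑ i, c i) = 1 ∧ (∀ i, IsPureProductState2 (P i)) ∧
      M = ∑ i, (c i : ℂ) • P i

/-- The maximally entangled pure state on `ℂ^{N₁} ⊗ ℂ^{N₂}` (for `N₁ ≤ N₂`):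
`E = |ψ⟩⟨ψ|` with `ψ = (1/√N₁) ∑ j, e j ⊗ e j`. -/
def maxEnt (N₁ N₂ : ℕ) : Matrix (Fin N₁ × Fin N₂) (Fin N₁ × Fin N₂) ℂ :=
  fun x y =>
    (if (x.1 : ℕ) = (x.2 : ℕ) then (((Real.sqrt N₁ : ℝ) : ℂ))⁻¹ else 0) *
      star (if (y.1 : ℕ) = (y.2 : ℕ) then (((Real.sqrt N₁ : ℝ) : ℂ))⁻¹ else 0)

/-! For pure states `A`, `B`, the overlap `Tr((A ⊗ B) E)` equals `Tr(A D) / N₁`, where `D` is the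
transpose of the compression of `B` to the first `N₁` basis vectors: a positive semidefinite
matrix of trace at most `Tr B = 1`. As `A` and `1 - A` are orthogonal projections,
`0 ≤ Tr(A D) ≤ Tr D ≤ 1`. The bound passes to separable states since `Q ↦ Tr(Q E)` is linear and
the interval `[0, 1/N₁]` is convex. -/

section Projection

variable {n R : Type*} [Fintype n] [CommRing R] [PartialOrder R] [StarRing R] [AddLeftMono R]
  {P D : Matrix n n R}

theorem IsStarProjection.trace_mul_nonneg (hP : IsStarProjection P) (hD : D.PosSemidef) :
    0 ≤ (P * D).trace := by
  have hPh : Pᴴ = P := hP.isSelfAdjoint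
  calc (0 : R) ≤ (Pᴴ * D * P).trace := (hD.conjTranspose_mul_mul_same P).trace_nonneg
    _ = (P * D).trace := by
      rw [hPh, trace_mul_comm, ← Matrix.mul_assoc, hP.isIdempotentElem.eq]

theorem IsStarProjection.trace_mul_le_trace [DecidableEq n] (hP : IsStarProjection P)
    (hD : D.PosSemidef) : (P * D).trace ≤ D.trace := by
  have := hP.one_sub.trace_mul_nonneg hD
  rwa [Matrix.sub_mul, Matrix.one_mul, trace_sub, sub_nonneg] at this

end Projection

theorem Matrix.PosSemidef.trace_submatrix_le {m n R : Type*} [Fintype m] [Fintype n] [Ring R]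
    [PartialOrder R] [StarRing R] [AddLeftMono R] {B : Matrix n n R} (hB : B.PosSemidef)
    {f : m → n} (hf : Function.Injective f) : (B.submatrix f f).trace ≤ B.trace := by
  classical
  calc (B.submatrix f f).trace = ∑ i ∈ Finset.univ.map ⟨f, hf⟩, B i i := by
        simp [trace, Finset.sum_map]
    _ ≤ B.trace := Finset.sum_le_univ_sum_of_nonneg fun _ => hB.diag_nonneg

theorem IsPureState.isStarProjection {m : Type*} [Fintype m] {M : Matrix m m ℂ}
    (hM : IsPureState M) : IsStarProjection M :=
  ⟨hM.2.1, hM.1⟩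

theorem IsPureState.posSemidef_s10 {m : Type*} [Fintype m] {M : Matrix m m ℂ}
    (hM : IsPureState M) : M.PosSemidef := by
  simpa only [hM.1.eq, hM.2.1] using posSemidef_conjTranspose_mul_self M

theorem IsSeparable2.map_mem_of_convex {m₁ m₂ E : Type*} [Fintype m₁] [Fintype m₂]
    [AddCommGroup E] [Module ℝ E] {s : Set E} (hs : Convex ℝ s)
    (f : Matrix (m₁ × m₂) (m₁ × m₂) ℂ →ₗ[ℝ] E) (hf : ∀ P, IsPureProductState2 P → f P ∈ s)
    {Q : Matrix (m₁ × m₂) (m₁ × m₂) ℂ} (hQ : IsSeparable2 Q) : f Q ∈ s := by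
  obtain ⟨k, c, P, hc, hcs, hP, rfl⟩ := hQ
  simpa only [map_sum, Complex.coe_smul, map_smul] using
    hs.sum_mem (fun i _ => hc i) hcs fun i _ => hf _ (hP i)

section MaxEnt

variable {N₁ N₂ : ℕ}

theorem trace_mul_maxEnt (h₁₂ : N₁ ≤ N₂) (M : Matrix (Fin N₁ × Fin N₂) (Fin N₁ × Fin N₂) ℂ) :
    (M * maxEnt N₁ N₂).trace =
      (N₁ : ℂ)⁻¹ * ∑ j, ∑ k, M (j, Fin.castLE h₁₂ j) (k, Fin.castLE h₁₂ k) := by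
  have hs : star (((√N₁ : ℝ) : ℂ))⁻¹ = ((√N₁ : ℝ) : ℂ)⁻¹ := by simp [← Complex.ofReal_inv]
  have hss : ((√N₁ : ℝ) : ℂ)⁻¹ * ((√N₁ : ℝ) : ℂ)⁻¹ = (N₁ : ℂ)⁻¹ := by
    rw [← mul_inv, ← Complex.ofReal_mul, Real.mul_self_sqrt N₁.cast_nonneg, Complex.ofReal_natCast]
  have hdiag (a : Fin N₁) (b : Fin N₂) : (a : ℕ) = b ↔ b = Fin.castLE h₁₂ a := by
    rw [Fin.ext_iff, Fin.val_castLE, eq_comm]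
  simp only [trace, diag, mul_apply, maxEnt, Fintype.sum_prod_type, hdiag, apply_ite star,
    star_zero, hs, mul_ite, mul_zero, ite_mul, zero_mul, Finset.sum_ite_eq', Finset.mem_univ,
    if_true, Finset.sum_ite_irrel, Finset.sum_const_zero, Finset.mul_sum]
  refine Finset.sum_congr rfl fun _ _ => Finset.sum_congr rfl fun _ _ => ?_
  rw [← hss]; ring

theorem trace_prodMat2_mul_maxEnt (h₁₂ : N₁ ≤ N₂) (A : Matrix (Fin N₁) (Fin N₁) ℂ)
    (B : Matrix (Fin N₂) (Fin N₂) ℂ) :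
    (prodMat2 A B * maxEnt N₁ N₂).trace =
      (N₁ : ℂ)⁻¹ * (A * (B.submatrix (Fin.castLE h₁₂) (Fin.castLE h₁₂))ᵀ).trace := by
  rw [trace_mul_maxEnt h₁₂]
  rfl

theorem IsPureProductState2.trace_mul_maxEnt_mem_Icc (h₁₂ : N₁ ≤ N₂)
    {P : Matrix (Fin N₁ × Fin N₂) (Fin N₁ × Fin N₂) ℂ} (hP : IsPureProductState2 P) :
    (P * maxEnt N₁ N₂).trace ∈ Set.Icc 0 (N₁ : ℂ)⁻¹ := by
  obtain ⟨A, B, hA, hB, rfl⟩ := hP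
  set D := (B.submatrix (Fin.castLE h₁₂) (Fin.castLE h₁₂))ᵀ
  have hD : D.PosSemidef := (hB.posSemidef_s10.submatrix _).transpose
  have hDtr : D.trace ≤ 1 := by
    rw [trace_transpose, ← hB.2.2]
    exact hB.posSemidef_s10.trace_submatrix_le (Fin.castLE_injective h₁₂)
  have hN : (0 : ℂ) ≤ (N₁ : ℂ)⁻¹ := by
    rw [← Complex.ofReal_natCast, ← Complex.ofReal_inv]
    exact Complex.zero_le_real.2 (by positivity)
  rw [trace_prodMat2_mul_maxEnt h₁₂]
  refine ⟨mul_nonneg hN (hA.isStarProjection.trace_mul_nonneg hD), ?_⟩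
  exact (mul_le_mul_of_nonneg_left
    ((hA.isStarProjection.trace_mul_le_trace hD).trans hDtr) hN).trans_eq (mul_one _)

end MaxEnt

theorem separable_trace_maxEnt_le_general {N₁ N₂ : ℕ} (h₁₂ : N₁ ≤ N₂)
    (Q : Matrix (Fin N₁ × Fin N₂) (Fin N₁ × Fin N₂) ℂ) (hQ : IsSeparable2 Q) :
    0 ≤ (Q * maxEnt N₁ N₂).trace ∧ (Q * maxEnt N₁ N₂).trace ≤ ((N₁ : ℂ))⁻¹ :=
  hQ.map_mem_of_convex (convex_Icc _ _)
    ((traceLinearMap _ ℝ ℂ).comp (LinearMap.mulRight ℝ (maxEnt N₁ N₂)))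
    fun _ hP => hP.trace_mul_maxEnt_mem_Icc h₁₂

/-- Let `2 ≤ N₁ ≤ N₂`, `N = N₁ N₂`, and let `E` be the maximally
entangled pure state on `ℂ^{N₁} ⊗ ℂ^{N₂}`.  Then every separable state `Q` satisfies
`0 ≤ Tr(QE) ≤ 1/N₁` (in the complex order, so in particular the trace is real). -/
theorem separable_trace_maxEnt_le {N₁ N₂ : ℕ} (h₁ : 2 ≤ N₁) (h₁₂ : N₁ ≤ N₂)
    (Q : Matrix (Fin N₁ × Fin N₂) (Fin N₁ × Fin N₂) ℂ) (hQ : IsSeparable2 Q) :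
    0 ≤ (Q * maxEnt N₁ N₂).trace ∧ (Q * maxEnt N₁ N₂).trace ≤ ((N₁ : ℂ))⁻¹ :=
  separable_trace_maxEnt_le_general h₁₂ Q hQ
end
end
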